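/- In a discrete semimodular lattice, if A is an antichain cutset, then A is a level class: A equals an equivalence class of the reflexive-transitive closure of the relation 'there exists an element covered by both'. -/

import Mathlib

/-- A maximal chain of the interval `[x, y]`. -/
def MaxChainIn {α : Type*} [Lattice α] (x y : α) (C : Set α) : Prop :=
  C ⊆ Set.Icc x y ∧ IsChain (· ≤ ·) C ∧
    ∀ D : Set α, D ⊆ Set.Icc x y → IsChain (· ≤ ·) D → C ⊆ D → C = D

/-- A lattice is discrete if every interval contains a finite maximal chain. -/
def IsDiscreteLattice (α : Type*) [Lattice α] : Prop :=
  ∀ x y : α, x ≤ y → ∃ C : Set α, MaxChainIn x y C ∧ C.Finite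

/-- Semimodularity (lower covering condition): if `x` covers `x ⊓ y` then `x ⊔ y` covers `y`. -/
def IsSemimodular (α : Type*) [Lattice α] : Prop :=
  ∀ x y : α, (x ⊓ y) ⋖ x → y ⋖ (x ⊔ y)

/-- `x ∼ y` iff some `z` is covered by both `x` and `y`. -/
def Sim {α : Type*} [Lattice α] (x y : α) : Prop :=
  ∃ z : α, z ⋖ x ∧ z ⋖ y

/-- The level equivalence: reflexive-transitive closure of `Sim`. -/
def LevelEquiv {α : Type*} [Lattice α] (x y : α) : Prop :=
  Relation.ReflTransGen Sim x y

section Aux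

variable {α : Type*} [Lattice α]

lemma rtg_covby_le {x y : α} (h : Relation.ReflTransGen (· ⋖ ·) x y) : x ≤ y := by
  induction h with
  | refl => exact le_refl _
  | tail _ h ih => exact ih.trans h.le

/-- Any two comparable elements of an antichain cutset are equal. -/
lemma cutset_antichain {A : Set α}
    (hA : ∀ C : Set α, IsMaxChain (· ≤ ·) C → ∃ x : α, A ∩ C = {x})
    {a b : α} (ha : a ∈ A) (hb : b ∈ A) (hab : a ≤ b) : a = b := by
  have hchain : IsChain (· ≤ ·) ({a, b} : Set α) := by
    intro x hx y hy _
    rcases hx with rfl | hx <;> rcases hy with rfl | hy <;>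
      simp_all [le_refl, hab]
  obtain ⟨C, hC, hsub⟩ := hchain.exists_maxChain
  obtain ⟨x, hx⟩ := hA C hC
  have h1 : a ∈ ({x} : Set α) := hx ▸ ⟨ha, hsub (by simp)⟩
  have h2 : b ∈ ({x} : Set α) := hx ▸ ⟨hb, hsub (by simp)⟩
  simp only [Set.mem_singleton_iff] at h1 h2
  rw [h1, h2]

/-- An antichain cutset is closed under `Sim`. -/
lemma sim_mem (hs : IsSemimodular α) {A : Set α}
    (hA : ∀ C : Set α, IsMaxChain (· ≤ ·) C → ∃ x : α, A ∩ C = {x})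
    {a w : α} (ha : a ∈ A) (h : Sim a w) : w ∈ A := by
  by_cases hne : w = a
  · exact hne ▸ ha
  obtain ⟨z, hza, hzw⟩ := h
  have hwa : ¬ w ≤ a := by
    intro hwle
    exact hza.2 hzw.lt (lt_of_le_of_ne hwle hne)
  have haw : a ⊓ w = z := by
    rcases hza.eq_or_eq (le_inf hza.le hzw.le) inf_le_left with h | h
    · exact h
    · exfalso
      have haw' : a ≤ w := h ▸ inf_le_right
      have : a < w := lt_of_le_of_ne haw' (fun he => hne he.symm)
      exact hzw.2 hza.lt this
  have hcov2 : w ⋖ a ⊔ w := hs a w (by rw [haw]; exact hza)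
  have hchain : IsChain (· ≤ ·) ({z, w, a ⊔ w} : Set α) := by
    have h1 : z ≤ w := hzw.le
    have h2 : w ≤ a ⊔ w := le_sup_right
    have h3 : z ≤ a ⊔ w := h1.trans h2
    intro x hx y hy _
    simp only [Set.mem_insert_iff, Set.mem_singleton_iff] at hx hy
    rcases hx with rfl | rfl | rfl <;> rcases hy with rfl | rfl | rfl <;>
      first
        | exact Or.inl le_rfl
        | exact Or.inl h1
        | exact Or.inr h1
        | exact Or.inl h2
        | exact Or.inr h2
        | exact Or.inl h3
        | exact Or.inr h3
  obtain ⟨C, hC, hsub⟩ := hchain.exists_maxChain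
  obtain ⟨c, hc⟩ := hA C hC
  have hcAC : c ∈ A ∩ C := hc ▸ rfl
  have hzC : z ∈ C := hsub (by simp)
  have hwC : w ∈ C := hsub (by simp)
  have hvC : a ⊔ w ∈ C := hsub (by simp)
  rcases eq_or_ne c w with rfl | hcne
  · exact hcAC.1
  exfalso
  rcases hC.1.total hcAC.2 hwC with hlt | hgt
  · have hclt : c < w := lt_of_le_of_ne hlt hcne
    have hcz : c ≤ z := by
      rcases hC.1.total hcAC.2 hzC with h | h
      · exact h
      · rcases eq_or_ne z c with rfl | hzne
        · exact le_refl _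
        · exact absurd hclt (hzw.2 (lt_of_le_of_ne h hzne))
    have hca : c < a := lt_of_le_of_lt hcz hza.lt
    exact hca.ne (cutset_antichain hA hcAC.1 ha hca.le)
  · have hwlt : w < c := lt_of_le_of_ne hgt (Ne.symm hcne)
    have hvc : a ⊔ w ≤ c := by
      rcases hC.1.total hvC hcAC.2 with h | h
      · exact h
      · rcases eq_or_ne c (a ⊔ w) with rfl | hne2
        · exact le_refl _
        · exact absurd (lt_of_le_of_ne h hne2) (hcov2.2 hwlt)
    have hav : a < a ⊔ w := by
      refine lt_of_le_of_ne le_sup_left (fun h => hwa ?_)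
      rw [h]; exact le_sup_right
    have hac : a < c := lt_of_lt_of_le hav hvc
    exact hac.ne (cutset_antichain hA ha hcAC.1 hac.le)

lemma maxChainIn_mem_left {x y : α} {C : Set α} (hxy : x ≤ y) (h : MaxChainIn x y C) :
    x ∈ C := by
  obtain ⟨hsub, hchain, hmax⟩ := h
  by_contra hx
  have hins : IsChain (· ≤ ·) (insert x C) :=
    hchain.insert (fun b hb _ => Or.inl (hsub hb).1)
  have heq := hmax (insert x C) ?_ hins (Set.subset_insert _ _)
  · exact hx (heq ▸ Set.mem_insert x C)
  · intro c hc
    rcases hc with rfl | hc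
    · exact ⟨le_refl _, hxy⟩
    · exact hsub hc

lemma maxChainIn_mem_right {x y : α} {C : Set α} (hxy : x ≤ y) (h : MaxChainIn x y C) :
    y ∈ C := by
  obtain ⟨hsub, hchain, hmax⟩ := h
  by_contra hy
  have hins : IsChain (· ≤ ·) (insert y C) :=
    hchain.insert (fun b hb _ => Or.inr (hsub hb).2)
  have heq := hmax (insert y C) ?_ hins (Set.subset_insert _ _)
  · exact hy (heq ▸ Set.mem_insert y C)
  · intro c hc
    rcases hc with rfl | hc
    · exact ⟨hxy, le_refl _⟩
    · exact hsub hc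

/-- A finite maximal chain in `[x, y]` yields a covering sequence from `x` to `y`. -/
lemma covseq_of_maxChainIn :
    ∀ (n : ℕ) (C : Set α) (hC : C.Finite), hC.toFinset.card ≤ n →
      ∀ x y : α, x ≤ y → MaxChainIn x y C → Relation.ReflTransGen (· ⋖ ·) x y := by
  intro n
  induction n with
  | zero =>
    intro C hC hcard x y hxy hmax
    exfalso
    have hxC : x ∈ C := maxChainIn_mem_left hxy hmax
    have : 0 < hC.toFinset.card :=
      Finset.card_pos.2 ⟨x, hC.mem_toFinset.2 hxC⟩
    omega
  | succ n ih =>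
    intro C hC hcard x y hxy hmax
    have hxC : x ∈ C := maxChainIn_mem_left hxy hmax
    obtain ⟨hsub, hchain, hmaxl⟩ := hmax
    rcases eq_or_lt_of_le hxy with rfl | hxy'
    · exact Relation.ReflTransGen.refl
    -- find the least element of C above x
    have hyC : y ∈ C := maxChainIn_mem_right hxy ⟨hsub, hchain, hmaxl⟩
    set S : Set α := C \ {x} with hS
    have hSfin : S.Finite := hC.subset (Set.diff_subset)
    have hSne : S.Nonempty := ⟨y, hyC, by simp [hxy'.ne']⟩
    obtain ⟨x', hx'S, hx'min⟩ := hSfin.exists_minimalFor id S hSne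
    have hx'least : ∀ b ∈ S, x' ≤ b := by
      intro b hb
      rcases hchain.total hx'S.1 hb.1 with h | h
      · exact h
      · exact hx'min hb h
    have hxx' : x < x' :=
      lt_of_le_of_ne (hsub hx'S.1).1 (fun h => hx'S.2 h.symm)
    have hcov : x ⋖ x' := by
      refine ⟨hxx', fun w hw hw' => ?_⟩
      have hwC : w ∉ C := by
        intro hwc
        have : w ∈ S := ⟨hwc, fun h => (lt_irrefl x (h ▸ hw))⟩
        exact absurd (hx'least w this) hw'.not_ge
      have hwIcc : w ∈ Set.Icc x y := ⟨hw.le, hw'.le.trans (hsub hx'S.1).2⟩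
      have hins : IsChain (· ≤ ·) (insert w C) := by
        refine hchain.insert (fun b hb _ => ?_)
        rcases eq_or_ne b x with rfl | hbx
        · exact Or.inr hw.le
        · exact Or.inl (hw'.le.trans (hx'least b ⟨hb, hbx⟩))
      have heq := hmaxl (insert w C) ?_ hins (Set.subset_insert _ _)
      · exact hwC (heq ▸ Set.mem_insert w C)
      · intro c hc
        rcases hc with rfl | hc
        · exact hwIcc
        · exact hsub hc
    -- the tail chain
    set C' : Set α := C ∩ Set.Icc x' y with hC'
    have hC'sub : C' ⊆ C := Set.inter_subset_left
    have hC'fin : C'.Finite := hC.subset hC'sub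
    have hCdecomp : ∀ c ∈ C, c = x ∨ c ∈ C' := by
      intro c hc
      rcases eq_or_ne c x with rfl | hcx
      · exact Or.inl rfl
      · exact Or.inr ⟨hc, hx'least c ⟨hc, hcx⟩, (hsub hc).2⟩
    have hmax' : MaxChainIn x' y C' := by
      refine ⟨Set.inter_subset_right, hchain.mono hC'sub, ?_⟩
      intro D hD hDchain hCD
      have hEchain : IsChain (· ≤ ·) (insert x D) := by
        refine hDchain.insert (fun b hb _ => Or.inl ?_)
        exact hxx'.le.trans (hD hb).1
      have hEsub : insert x D ⊆ Set.Icc x y := by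
        intro c hc
        rcases hc with rfl | hc
        · exact ⟨le_refl _, hxy⟩
        · exact ⟨hxx'.le.trans (hD hc).1, (hD hc).2⟩
      have hCE : C ⊆ insert x D := by
        intro c hc
        rcases hCdecomp c hc with rfl | hc'
        · exact Set.mem_insert _ _
        · exact Set.mem_insert_of_mem _ (hCD hc')
      have heq := hmaxl (insert x D) hEsub hEchain hCE
      apply Set.Subset.antisymm hCD
      intro d hd
      have hdC : d ∈ C := by
        have : d ∈ insert x D := Set.mem_insert_of_mem _ hd
        rw [← heq] at this; exact this
      exact ⟨hdC, (hD hd).1, (hD hd).2⟩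
    have hxnot : x ∉ C' := by
      intro h
      exact absurd h.2.1 hxx'.not_ge
    have hcard' : hC'fin.toFinset.card ≤ n := by
      have hss : hC'fin.toFinset ⊂ hC.toFinset := by
        refine Finset.ssubset_iff_of_subset ?_ |>.2 ⟨x, hC.mem_toFinset.2 hxC, ?_⟩
        · intro c hc
          exact hC.mem_toFinset.2 (hC'sub (hC'fin.mem_toFinset.1 hc))
        · intro h
          exact hxnot (hC'fin.mem_toFinset.1 h)
      have := Finset.card_lt_card hss
      omega
    exact Relation.ReflTransGen.head hcov
      (ih C' hC'fin hcard' x' y (hsub hx'S.1).2 hmax')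

/-- The key induction: if `b ∈ A` and there is a covering sequence from `z` to `b`, then
every `a ∈ A` above `z` is level-equivalent to `b`. -/
lemma main_step (hd : IsDiscreteLattice α) (hs : IsSemimodular α) {A : Set α}
    (hA : ∀ C : Set α, IsMaxChain (· ≤ ·) C → ∃ x : α, A ∩ C = {x})
    {b : α} (hb : b ∈ A) :
    ∀ {z : α}, Relation.ReflTransGen (· ⋖ ·) z b →
      ∀ {a : α}, a ∈ A → z ≤ a → Relation.ReflTransGen Sim a b := by
  intro z hzb
  induction hzb using Relation.ReflTransGen.head_induction_on with
  | refl =>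
    intro a ha hba
    have : b = a := cutset_antichain hA hb ha hba
    exact this ▸ Relation.ReflTransGen.refl
  | head hcov hrest ih =>
    rename_i z c
    intro a ha hza
    by_cases hca : c ≤ a
    · exact ih ha hca
    · obtain ⟨Ca, hCa, hfin⟩ := hd z a hza
      have hza' : Relation.ReflTransGen (· ⋖ ·) z a :=
        covseq_of_maxChainIn hfin.toFinset.card Ca hfin (le_refl _) z a hza hCa
      rcases hza'.cases_tail with heq | ⟨p, hzp, hpa⟩
      · exfalso
        have hab : a < b := by
          rw [heq]
          exact lt_of_lt_of_le hcov.lt (rtg_covby_le hrest)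
        exact hab.ne (cutset_antichain hA ha hb hab.le)
      · have hzp' : z ≤ p := rtg_covby_le hzp
        have hpc : c ⊓ p = z := by
          rcases hcov.eq_or_eq (le_inf hcov.le hzp') inf_le_left with h | h
          · exact h
          · exact absurd ((h ▸ inf_le_right : c ≤ p).trans hpa.le) hca
        have hpw : p ⋖ c ⊔ p := hs c p (by rw [hpc]; exact hcov)
        have hsim : Sim a (c ⊔ p) := ⟨p, hpa, hpw⟩
        have hwA : c ⊔ p ∈ A := sim_mem hs hA ha hsim
        exact (Relation.ReflTransGen.single hsim).trans (ih hwA le_sup_left)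

end Aux

theorem stmt8 {α : Type*} [Lattice α] (hd : IsDiscreteLattice α) (hs : IsSemimodular α)
    (A : Set α) (hA : ∀ C : Set α, IsMaxChain (· ≤ ·) C → ∃ x : α, A ∩ C = {x}) :
    ∃ a : α, A = {x : α | LevelEquiv a x} := by
  have hempty : IsChain (· ≤ ·) (∅ : Set α) := Set.pairwise_empty _
  obtain ⟨C, hC, -⟩ := hempty.exists_maxChain
  obtain ⟨a, haC⟩ := hA C hC
  have haA : a ∈ A := by
    have : a ∈ A ∩ C := haC ▸ rfl
    exact this.1
  refine ⟨a, Set.ext fun x => ⟨fun hx => ?_, fun hx => ?_⟩⟩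
  · -- x ∈ A → LevelEquiv a x
    obtain ⟨C', hC', hfin⟩ := hd (a ⊓ x) x inf_le_right
    have hseq : Relation.ReflTransGen (· ⋖ ·) (a ⊓ x) x :=
      covseq_of_maxChainIn hfin.toFinset.card C' hfin (le_refl _) _ _ inf_le_right hC'
    exact main_step hd hs hA hx hseq haA inf_le_left
  · -- LevelEquiv a x → x ∈ A
    simp only [Set.mem_setOf_eq] at hx
    induction hx with
    | refl => exact haA
    | tail _ hsim ih => exact sim_mem hs hA ih hsim
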